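/- Let G be a finite simple graph with clique number ω(G), and let Z be a fractional cocoloring of G in which the total weight assigned to cliques is Z_ω. Let V₁ be the set of vertices v such that the total Z-weight of the cliques containing v is at least 1/2. Then |V₁| ≤ 2 · ω(G) · Z_ω. -/
import Mathlib


open Finset

/-- A finset is an independent set in `G`. -/
def IsIndepF {V : Type*} (G : SimpleGraph V) (s : Finset V) : Prop :=
  ∀ u ∈ s, ∀ v ∈ s, ¬ G.Adj u v

/-- A finset is a clique in `G`. -/
def IsCliqueF {V : Type*} (G : SimpleGraph V) (s : Finset V) : Prop :=
  ∀ u ∈ s, ∀ v ∈ s, u ≠ v → G.Adj u v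

/-- A fractional cocoloring given by separate weight functions `wc` on cliques and
`wi` on independent sets, covering every vertex with total weight at least 1. -/
def IsFracCocoloring2 {V : Type*} [Fintype V] [DecidableEq V] (G : SimpleGraph V)
    (wc wi : Finset V → ℝ) : Prop :=
  (∀ s, 0 ≤ wc s) ∧ (∀ s, 0 ≤ wi s) ∧
  (∀ s, wc s ≠ 0 → IsCliqueF G s) ∧ (∀ s, wi s ≠ 0 → IsIndepF G s) ∧
  (∀ v : V, 1 ≤ ∑ s ∈ Finset.univ.filter (fun s : Finset V => v ∈ s), (wc s + wi s))

/-- The clique number: the largest size of a clique. -/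
noncomputable def cliqueNumF {V : Type*} [Fintype V] (G : SimpleGraph V) : ℕ :=
  sSup {n : ℕ | ∃ s : Finset V, IsCliqueF G s ∧ s.card = n}

lemma card_le_cliqueNumF {V : Type*} [Fintype V] (G : SimpleGraph V) (s : Finset V)
    (hs : IsCliqueF G s) : s.card ≤ cliqueNumF G := by
  apply le_csSup
  · refine ⟨Fintype.card V, ?_⟩
    rintro n ⟨t, -, rfl⟩
    exact t.card_le_univ.trans_eq (Finset.card_univ)
  · exact ⟨s, hs, rfl⟩

/-- If `Z = (wc, wi)` is a fractional cocoloring of `G` whose total weight on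
cliques is `Zω`, and `V₁` is the set of vertices carrying clique weight at least `1/2`, then
`|V₁| ≤ 2 · ω(G) · Zω`. -/
theorem card_heavy_clique_vertices_le {V : Type*} [Fintype V] [DecidableEq V]
    (G : SimpleGraph V) (wc wi : Finset V → ℝ) (hZ : IsFracCocoloring2 G wc wi)
    (Zω : ℝ) (hZω : Zω = ∑ s : Finset V, wc s)
    (V₁ : Finset V)
    (hV₁ : ∀ v : V, v ∈ V₁ ↔
      1 / 2 ≤ ∑ s ∈ Finset.univ.filter (fun s : Finset V => v ∈ s), wc s) :
    (V₁.card : ℝ) ≤ 2 * (cliqueNumF G : ℝ) * Zω := by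
  obtain ⟨hwc, hwi, hc, hi, hcover⟩ := hZ
  have key : (V₁.card : ℝ) / 2 ≤
      ∑ v ∈ V₁, ∑ s ∈ Finset.univ.filter (fun s : Finset V => v ∈ s), wc s := by
    calc (V₁.card : ℝ) / 2 = ∑ _v ∈ V₁, (1/2 : ℝ) := by
          rw [Finset.sum_const, nsmul_eq_mul]; ring
      _ ≤ _ := Finset.sum_le_sum (fun v hv => (hV₁ v).1 hv)
  have swap : ∑ v ∈ V₁, ∑ s ∈ Finset.univ.filter (fun s : Finset V => v ∈ s), wc s
      = ∑ s : Finset V, wc s * ((V₁.filter (fun v => v ∈ s)).card : ℝ) := by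
    have : ∀ v, ∑ s ∈ Finset.univ.filter (fun s : Finset V => v ∈ s), wc s
        = ∑ s : Finset V, if v ∈ s then wc s else 0 := by
      intro v; rw [Finset.sum_filter]
    simp_rw [this]
    rw [Finset.sum_comm]
    congr 1
    ext s
    rw [Finset.sum_ite_mem, Finset.inter_comm]
    simp [Finset.sum_const, nsmul_eq_mul, mul_comm, Finset.filter_mem_eq_inter,
      Finset.inter_comm]
  have bound : ∑ s : Finset V, wc s * ((V₁.filter (fun v => v ∈ s)).card : ℝ)
      ≤ ∑ s : Finset V, wc s * (cliqueNumF G : ℝ) := by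
    apply Finset.sum_le_sum
    intro s _
    rcases eq_or_ne (wc s) 0 with h | h
    · simp [h]
    · apply mul_le_mul_of_nonneg_left _ (hwc s)
      have h1 : (V₁.filter (fun v => v ∈ s)).card ≤ s.card :=
        Finset.card_le_card (fun v hv => (Finset.mem_filter.1 hv).2)
      exact_mod_cast h1.trans (card_le_cliqueNumF G s (hc s h))
  rw [← Finset.sum_mul, ← hZω] at bound
  have := key.trans (swap ▸ bound)
  linarith
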